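/- arXiv:1207.0175 — 4 statements merged into one kernel-verified Lean document; each statement's English description precedes it below -/
import Mathlib

section
/- Let H be a real Hilbert space and let L : H → H be a continuous self-adjoint linear operator that is nonnegative, i.e. ⟨L x, x⟩ ≥ 0 for all x ∈ H. Suppose a, b ∈ H and e ∈ ℝ with e > 0 satisfy L b = e·a and a ≠ 0. Then ⟨a, b⟩ > 0. -/
open scoped RealInnerProductSpace

/-- If `L` is a nonnegative self-adjoint operator, `L b = e • a` with `e > 0` and `a ≠ 0`,
then `⟪a, b⟫ > 0`. -/
theorem stmt2 {H : Type*} [NormedAddCommGroup H] [InnerProductSpace ℝ H] [CompleteSpace H]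
    (L : H →L[ℝ] H)
    (hLsa : ∀ x y : H, ⟪L x, y⟫ = ⟪x, L y⟫)
    (hLnonneg : ∀ x : H, 0 ≤ ⟪L x, x⟫)
    (a b : H) (e : ℝ) (he : 0 < e) (heq : L b = e • a) (ha : a ≠ 0) :
    0 < ⟪a, b⟫ := by
  set s : ℝ := ⟪a, b⟫ with hs
  set c : ℝ := ⟪L a, a⟫ with hc
  set n : ℝ := ⟪a, a⟫ with hn
  have hnpos : 0 < n := by
    have := real_inner_self_eq_norm_sq a
    have h2 : 0 < ‖a‖ := norm_pos_iff.mpr ha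
    rw [hn, this]; positivity
  have hcnonneg : 0 ≤ c := hLnonneg a
  have hLbb : ⟪L b, b⟫ = e * s := by
    rw [heq, real_inner_smul_left]
  have hLba : ⟪L b, a⟫ = e * n := by
    rw [heq, real_inner_smul_left]
  have hLab : ⟪L a, b⟫ = e * n := by
    rw [hLsa, heq, real_inner_smul_right]
  have key : ∀ t : ℝ, 0 ≤ c * (t * t) + (2 * (e * n)) * t + e * s := by
    intro t
    have h := hLnonneg (b + t • a)
    have expand : ⟪L (b + t • a), b + t • a⟫ =
        c * (t * t) + (2 * (e * n)) * t + e * s := by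
      rw [map_add, map_smul]
      simp only [inner_add_left, inner_add_right, real_inner_smul_left,
        real_inner_smul_right, ContinuousLinearMap.coe_smul', Pi.smul_apply, smul_eq_mul]
      rw [hLbb, hLba, hLab]
      ring
    linarith [expand ▸ h]
  -- final
  have hd : discrim c (2 * (e * n)) (e * s) ≤ 0 := by
    rcases eq_or_lt_of_le hcnonneg with hc0 | hcpos
    · exfalso
      have h := key (-(e * s + 1) / (2 * (e * n)))
      rw [← hc0] at h
      have hen : 0 < 2 * (e * n) := by positivity
      field_simp at h
      nlinarith
    · exact discrim_le_zero (by intro t; simpa using key t)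
  rw [discrim] at hd
  by_contra hcon
  push_neg at hcon
  have h1 : c * (e * s) ≤ 0 :=
    mul_nonpos_of_nonneg_of_nonpos hcnonneg (mul_nonpos_of_nonneg_of_nonpos he.le hcon)
  nlinarith [mul_pos he hnpos]
end

section
/- Let 1 < m₁ ≤ m₂ and let g : ℂ → ℂ, viewed as a map from ℝ² to ℝ², be continuously (real-)differentiable on ℂ and twice continuously differentiable on ℂ∖{0}, with g(0) = 0, Dg(0) = 0, and ‖D²g(u)‖ ≤ K(|u|^{m₁−2} + |u|^{m₂−2}) for all u ≠ 0 and some constant K ≥ 0. Define, for φ, ε ∈ ℂ, the Taylor remainder 𝒩(φ, ε) = g(φ + ε) − g(φ) − Dg(φ)ε, where Dg(φ)ε denotes the real Fréchet derivative of g at φ applied to ε. Then there exists a constant C = C(K, m₁, m₂) such that for all φ, ε ∈ ℂ: |𝒩(φ, ε)| ≤ C( A₁|φ|^{m₁−2}|ε|² + A₂|φ|^{m₂−2}|ε|² + |ε|^{m₁} + |ε|^{m₂} ), where A_j = 1 if m_j > 2 and A_j = 0 if m_j ≤ 2. -/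
/-!
The Hessian bound first gives `‖Dg(u)‖ ≲ |u|^{m₁-1} + |u|^{m₂-1}`: on the segment from `u/2` to `u`
all moduli are comparable to `|u|`, so the mean value inequality bounds `Dg(u) - Dg(u/2)` by
`|u|^{m₁-1} + |u|^{m₂-1}`, and these increments form a convergent geometric series along the dyadic
points `2⁻ⁿu → 0` because `m₁ > 1`.

The remainder is then estimated on the ball `B(φ, |ε|)`. If `|φ| ≤ 2|ε|`, every point of the ball
has modulus at most `3|ε|` and the bound on `Dg` gives `|𝒩| ≲ |ε|^{m₁} + |ε|^{m₂}`. If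
`|φ| > 2|ε|`, every point has modulus comparable to `|φ|`, so the second-order mean value
inequality gives `|𝒩| ≲ (|φ|^{m₁-2} + |φ|^{m₂-2})|ε|²`; a term with `m_j ≤ 2` is at most
`|ε|^{m_j}` since `|ε| ≤ |φ|`.
-/

open Filter Topology Metric

lemma rpow_le_two_rpow_abs_mul_rpow {x y : ℝ} (p : ℝ) (hy : 0 < y) (hlo : y / 2 ≤ x)
    (hhi : x ≤ 2 * y) : x ^ p ≤ 2 ^ |p| * y ^ p := by
  rcases le_or_gt 0 p with hp | hp
  · calc x ^ p ≤ (2 * y) ^ p := Real.rpow_le_rpow (by linarith) hhi hp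
      _ = 2 ^ |p| * y ^ p := by rw [abs_of_nonneg hp, Real.mul_rpow zero_le_two hy.le]
  · calc x ^ p ≤ (y / 2) ^ p := Real.rpow_le_rpow_of_nonpos (by positivity) hlo hp.le
      _ = 2 ^ |p| * y ^ p := by
        rw [abs_of_neg hp, Real.div_rpow hy.le zero_le_two, Real.rpow_neg zero_le_two]
        ring

lemma rpow_sub_two_mul_rpow_two_le {x y : ℝ} (m : ℝ) (hy : 0 ≤ y) (hyx : y ≤ x) :
    x ^ (m - 2) * y ^ (2 : ℝ) ≤ (if 2 < m then x ^ (m - 2) * y ^ (2 : ℝ) else 0) + y ^ m := by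
  split_ifs with hm
  · linarith [Real.rpow_nonneg hy m]
  rcases hy.eq_or_lt with rfl | hy
  · rw [Real.zero_rpow two_ne_zero, mul_zero, zero_add]
    exact Real.rpow_nonneg le_rfl m
  calc x ^ (m - 2) * y ^ (2 : ℝ) ≤ y ^ (m - 2) * y ^ (2 : ℝ) :=
        mul_le_mul_of_nonneg_right (Real.rpow_le_rpow_of_nonpos hy hyx (by linarith))
          (Real.rpow_nonneg hy.le _)
    _ = 0 + y ^ m := by rw [← Real.rpow_add hy, sub_add_cancel, zero_add]

lemma norm_sub_le_of_norm_sub_smul_le {E F : Type*} [NormedAddCommGroup E] [NormedSpace ℝ E]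
    [SeminormedAddCommGroup F] {f : E → F} (hf : ContinuousAt f 0) {c : ℝ} (hc : |c| < 1)
    {a b p q : ℝ} (ha : 0 ≤ a) (hb : 0 ≤ b) (hp : 0 < p) (hq : 0 < q)
    (hstep : ∀ u, ‖f u - f (c • u)‖ ≤ a * ‖u‖ ^ p + b * ‖u‖ ^ q) (u : E) :
    ‖f u - f 0‖ ≤ a / (1 - |c| ^ p) * ‖u‖ ^ p + b / (1 - |c| ^ q) * ‖u‖ ^ q := by
  have hcp : 0 < 1 - |c| ^ p := sub_pos.2 (Real.rpow_lt_one (abs_nonneg c) hc hp)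
  have hcq : 0 < 1 - |c| ^ q := sub_pos.2 (Real.rpow_lt_one (abs_nonneg c) hc hq)
  have hiter : ∀ (n : ℕ) (u : E), ‖f u - f (c ^ n • u)‖ ≤
      a / (1 - |c| ^ p) * ‖u‖ ^ p + b / (1 - |c| ^ q) * ‖u‖ ^ q := by
    intro n
    induction n with
    | zero => intro u; simp only [pow_zero, one_smul, sub_self, norm_zero]; positivity
    | succ n ih =>
      intro u
      calc ‖f u - f (c ^ (n + 1) • u)‖
          ≤ ‖f u - f (c • u)‖ + ‖f (c • u) - f (c ^ n • c • u)‖ := by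
            rw [pow_succ, mul_smul]; exact norm_sub_le_norm_sub_add_norm_sub _ _ _
        _ ≤ (a * ‖u‖ ^ p + b * ‖u‖ ^ q) +
            (a / (1 - |c| ^ p) * ‖c • u‖ ^ p + b / (1 - |c| ^ q) * ‖c • u‖ ^ q) :=
            add_le_add (hstep u) (ih _)
        _ = a / (1 - |c| ^ p) * ‖u‖ ^ p + b / (1 - |c| ^ q) * ‖u‖ ^ q := by
            rw [norm_smul, Real.norm_eq_abs, Real.mul_rpow (abs_nonneg c) (norm_nonneg u),
              Real.mul_rpow (abs_nonneg c) (norm_nonneg u)]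
            field_simp
            ring
  have hlim : Tendsto (fun n : ℕ ↦ ‖f u - f (c ^ n • u)‖) atTop (𝓝 ‖f u - f 0‖) := by
    have hcu : Tendsto (fun n : ℕ ↦ c ^ n • u) atTop (𝓝 0) := by
      simpa using (tendsto_pow_atTop_nhds_zero_of_abs_lt_one hc).smul_const u
    exact (tendsto_const_nhds.sub (hf.tendsto.comp hcu)).norm
  exact le_of_tendsto' hlim fun n ↦ hiter n u

section

variable {E F : Type*} [NormedAddCommGroup E] [NormedSpace ℝ E]
  [NormedAddCommGroup F] [NormedSpace ℝ F]

lemma norm_taylorRemainder_le_of_norm_le_two_mul {f : E → F} (hf : Differentiable ℝ f)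
    {a b p q : ℝ} (ha : 0 ≤ a) (hb : 0 ≤ b) (hp : 1 ≤ p) (hq : 1 ≤ q)
    (hDf : ∀ u, ‖fderiv ℝ f u‖ ≤ a * ‖u‖ ^ (p - 1) + b * ‖u‖ ^ (q - 1))
    {x h : E} (hx : ‖x‖ ≤ 2 * ‖h‖) :
    ‖f (x + h) - f x - fderiv ℝ f x h‖ ≤
      2 * (a * 3 ^ (p - 1) * ‖h‖ ^ p + b * 3 ^ (q - 1) * ‖h‖ ^ q) := by
  have hball : ∀ z ∈ closedBall x ‖h‖, ‖fderiv ℝ f z‖ ≤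
      a * 3 ^ (p - 1) * ‖h‖ ^ (p - 1) + b * 3 ^ (q - 1) * ‖h‖ ^ (q - 1) := by
    intro z hz
    have hz3 : ‖z‖ ≤ 3 * ‖h‖ := by
      rw [mem_closedBall, dist_eq_norm] at hz
      linarith [norm_le_norm_add_norm_sub' z x]
    refine (hDf z).trans ?_
    rw [mul_assoc a, mul_assoc b, ← Real.mul_rpow zero_le_three (norm_nonneg h),
      ← Real.mul_rpow zero_le_three (norm_nonneg h)]
    gcongr
  have hx_mem : x ∈ closedBall x ‖h‖ := mem_closedBall_self (norm_nonneg h)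
  have hxh_mem : x + h ∈ closedBall x ‖h‖ := by simp
  have hmvt := (convex_closedBall x ‖h‖).norm_image_sub_le_of_norm_fderiv_le' (fun z _ ↦ hf z)
    (fun z hz ↦ (norm_sub_le _ _).trans (add_le_add (hball z hz) (hball x hx_mem))) hx_mem hxh_mem
  rw [add_sub_cancel_left] at hmvt
  have hpow : ∀ r : ℝ, 1 ≤ r → ‖h‖ ^ (r - 1) * ‖h‖ = ‖h‖ ^ r := fun r hr ↦ by
    rw [← Real.rpow_add_one' (norm_nonneg h) (by linarith), sub_add_cancel]
  refine hmvt.trans_eq ?_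
  rw [← hpow p hp, ← hpow q hq]
  ring

variable {m₁ m₂ K : ℝ} {g : E → F}

lemma norm_fderiv_sub_fderiv_le_of_comparable (hK : 0 ≤ K) (hg2 : ContDiffOn ℝ 2 g {0}ᶜ)
    (hD2 : ∀ u : E, u ≠ 0 →
      ‖iteratedFDeriv ℝ 2 g u‖ ≤ K * (‖u‖ ^ (m₁ - 2) + ‖u‖ ^ (m₂ - 2)))
    {s : Set E} (hs : Convex ℝ s) {ρ : ℝ} (hρ : 0 < ρ)
    (hcomp : ∀ w ∈ s, ρ / 2 ≤ ‖w‖ ∧ ‖w‖ ≤ 2 * ρ) {x y : E} (hx : x ∈ s) (hy : y ∈ s) :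
    ‖fderiv ℝ g y - fderiv ℝ g x‖ ≤
      K * (2 ^ |m₁ - 2| * ρ ^ (m₁ - 2) + 2 ^ |m₂ - 2| * ρ ^ (m₂ - 2)) * ‖y - x‖ := by
  have hne : ∀ w ∈ s, w ≠ 0 := fun w hw ↦ norm_pos_iff.mp (by linarith [(hcomp w hw).1])
  refine hs.norm_image_sub_le_of_norm_fderiv_le (𝕜 := ℝ) (fun w hw ↦ ?_) (fun w hw ↦ ?_) hx hy
  · exact ((hg2.contDiffAt (isOpen_compl_singleton.mem_nhds (hne w hw))).fderiv_right
      one_add_one_eq_two.le).differentiableAt one_ne_zero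
  · obtain ⟨hlo, hhi⟩ := hcomp w hw
    rw [← norm_iteratedFDeriv_one, norm_iteratedFDeriv_fderiv]
    refine (hD2 w (hne w hw)).trans (mul_le_mul_of_nonneg_left ?_ hK)
    gcongr <;> exact rpow_le_two_rpow_abs_mul_rpow _ hρ hlo hhi

lemma norm_taylorRemainder_le_of_two_mul_norm_lt (hK : 0 ≤ K) (hg2 : ContDiffOn ℝ 2 g {0}ᶜ)
    (hD2 : ∀ u : E, u ≠ 0 →
      ‖iteratedFDeriv ℝ 2 g u‖ ≤ K * (‖u‖ ^ (m₁ - 2) + ‖u‖ ^ (m₂ - 2)))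
    {x h : E} (hx : 2 * ‖h‖ < ‖x‖) :
    ‖g (x + h) - g x - fderiv ℝ g x h‖ ≤
      K * (2 ^ |m₁ - 2| * ‖x‖ ^ (m₁ - 2) + 2 ^ |m₂ - 2| * ‖x‖ ^ (m₂ - 2)) * ‖h‖ ^ (2 : ℝ) := by
  have hcomp : ∀ w ∈ closedBall x ‖h‖, ‖x‖ / 2 ≤ ‖w‖ ∧ ‖w‖ ≤ 2 * ‖x‖ := by
    intro w hw
    rw [mem_closedBall, dist_eq_norm] at hw
    constructor <;> linarith [norm_le_norm_add_norm_sub' w x, norm_le_norm_add_norm_sub' x w,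
      norm_sub_rev x w]
  have hx0 : 0 < ‖x‖ := by linarith [norm_nonneg h]
  have hx_mem : x ∈ closedBall x ‖h‖ := mem_closedBall_self (norm_nonneg h)
  have hxh_mem : x + h ∈ closedBall x ‖h‖ := by simp
  have hdiff : ∀ w ∈ closedBall x ‖h‖, DifferentiableAt ℝ g w := fun w hw ↦
    have hw0 : w ≠ 0 := norm_pos_iff.mp (by linarith [(hcomp w hw).1])
    (hg2.contDiffAt (isOpen_compl_singleton.mem_nhds hw0)).differentiableAt two_ne_zero
  have hlip : ∀ w ∈ closedBall x ‖h‖, ‖fderiv ℝ g w - fderiv ℝ g x‖ ≤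
      K * (2 ^ |m₁ - 2| * ‖x‖ ^ (m₁ - 2) + 2 ^ |m₂ - 2| * ‖x‖ ^ (m₂ - 2)) * ‖h‖ := fun w hw ↦
    (norm_fderiv_sub_fderiv_le_of_comparable hK hg2 hD2 (convex_closedBall x ‖h‖) hx0 hcomp
      hx_mem hw).trans (mul_le_mul_of_nonneg_left (mem_closedBall_iff_norm.mp hw) (by positivity))
  have hmvt := (convex_closedBall x ‖h‖).norm_image_sub_le_of_norm_fderiv_le' hdiff hlip
    hx_mem hxh_mem
  rw [add_sub_cancel_left] at hmvt
  rw [Real.rpow_two, sq, ← mul_assoc]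
  exact hmvt

lemma norm_fderiv_sub_fderiv_half_smul_le (hK : 0 ≤ K) (hg2 : ContDiffOn ℝ 2 g {0}ᶜ)
    (hD2 : ∀ u : E, u ≠ 0 →
      ‖iteratedFDeriv ℝ 2 g u‖ ≤ K * (‖u‖ ^ (m₁ - 2) + ‖u‖ ^ (m₂ - 2))) (u : E) :
    ‖fderiv ℝ g u - fderiv ℝ g ((2 : ℝ)⁻¹ • u)‖ ≤
      K * 2 ^ |m₁ - 2| * ‖u‖ ^ (m₁ - 1) + K * 2 ^ |m₂ - 2| * ‖u‖ ^ (m₂ - 1) := by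
  rcases eq_or_ne u 0 with rfl | hu
  · rw [smul_zero, sub_self, norm_zero]
    positivity
  have hu0 : 0 < ‖u‖ := norm_pos_iff.mpr hu
  have hcomp : ∀ w ∈ segment ℝ ((2 : ℝ)⁻¹ • u) u, ‖u‖ / 2 ≤ ‖w‖ ∧ ‖w‖ ≤ 2 * ‖u‖ := by
    rintro w ⟨s, t, hs, ht, hst, rfl⟩
    rw [smul_smul, ← add_smul, norm_smul, Real.norm_eq_abs, abs_of_nonneg (by positivity)]
    constructor <;> nlinarith
  have hhalf : ‖u - (2 : ℝ)⁻¹ • u‖ ≤ ‖u‖ := by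
    rw [show u - (2 : ℝ)⁻¹ • u = (2 : ℝ)⁻¹ • u by module, norm_smul]
    norm_num
    linarith
  have hpow : ∀ m : ℝ, ‖u‖ ^ (m - 2) * ‖u‖ = ‖u‖ ^ (m - 1) := fun m ↦ by
    rw [← Real.rpow_add_one hu0.ne']; ring_nf
  calc _ ≤ K * (2 ^ |m₁ - 2| * ‖u‖ ^ (m₁ - 2) + 2 ^ |m₂ - 2| * ‖u‖ ^ (m₂ - 2)) * ‖u‖ :=
        (norm_fderiv_sub_fderiv_le_of_comparable hK hg2 hD2 (convex_segment _ _) hu0 hcomp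
          (left_mem_segment ℝ _ _) (right_mem_segment ℝ _ _)).trans
          (mul_le_mul_of_nonneg_left hhalf (by positivity))
    _ = _ := by rw [← hpow m₁, ← hpow m₂]; ring

lemma exists_norm_fderiv_le (hm₁ : 1 < m₁) (hm₂ : 1 < m₂) (hK : 0 ≤ K) (hg1 : ContDiff ℝ 1 g)
    (hg2 : ContDiffOn ℝ 2 g {0}ᶜ) (hDg0 : fderiv ℝ g 0 = 0)
    (hD2 : ∀ u : E, u ≠ 0 →
      ‖iteratedFDeriv ℝ 2 g u‖ ≤ K * (‖u‖ ^ (m₁ - 2) + ‖u‖ ^ (m₂ - 2))) :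
    ∃ a b : ℝ, 0 ≤ a ∧ 0 ≤ b ∧
      ∀ u, ‖fderiv ℝ g u‖ ≤ a * ‖u‖ ^ (m₁ - 1) + b * ‖u‖ ^ (m₂ - 1) := by
  have hc : |(2 : ℝ)⁻¹| < 1 := by norm_num [abs_of_pos]
  have hr : ∀ p : ℝ, 0 < p → 0 < 1 - |(2 : ℝ)⁻¹| ^ p := fun p hp ↦
    sub_pos.2 (Real.rpow_lt_one (abs_nonneg _) hc hp)
  refine ⟨K * 2 ^ |m₁ - 2| / (1 - |(2 : ℝ)⁻¹| ^ (m₁ - 1)),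
    K * 2 ^ |m₂ - 2| / (1 - |(2 : ℝ)⁻¹| ^ (m₂ - 1)),
    div_nonneg (by positivity) (hr _ (sub_pos.2 hm₁)).le,
    div_nonneg (by positivity) (hr _ (sub_pos.2 hm₂)).le, fun u ↦ ?_⟩
  simpa only [hDg0, sub_zero] using
    norm_sub_le_of_norm_sub_smul_le (hg1.continuous_fderiv one_ne_zero).continuousAt hc
      (by positivity) (by positivity) (sub_pos.2 hm₁) (sub_pos.2 hm₂)
      (norm_fderiv_sub_fderiv_half_smul_le hK hg2 hD2) u

end

theorem stmt4_general (m₁ m₂ : ℝ) (hm₁ : 1 < m₁) (hm₁₂ : m₁ ≤ m₂) (K : ℝ) (hK : 0 ≤ K)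
    (g : ℂ → ℂ) (hg1 : ContDiff ℝ 1 g) (hg2 : ContDiffOn ℝ 2 g {(0 : ℂ)}ᶜ)
    (hDg0 : fderiv ℝ g 0 = 0)
    (hD2 : ∀ u : ℂ, u ≠ 0 →
      ‖iteratedFDeriv ℝ 2 g u‖ ≤ K * (‖u‖ ^ (m₁ - 2) + ‖u‖ ^ (m₂ - 2))) :
    ∃ C : ℝ, ∀ φ ε : ℂ,
      ‖g (φ + ε) - g φ - fderiv ℝ g φ ε‖ ≤
        C * ((if 2 < m₁ then ‖φ‖ ^ (m₁ - 2) * ‖ε‖ ^ (2 : ℝ) else 0)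
            + (if 2 < m₂ then ‖φ‖ ^ (m₂ - 2) * ‖ε‖ ^ (2 : ℝ) else 0)
            + ‖ε‖ ^ m₁ + ‖ε‖ ^ m₂) := by
  have hm₂ : 1 < m₂ := hm₁.trans_le hm₁₂
  obtain ⟨a, b, ha, hb, hDg⟩ := exists_norm_fderiv_le hm₁ hm₂ hK hg1 hg2 hDg0 hD2
  set C := max (max (2 * (a * 3 ^ (m₁ - 1))) (2 * (b * 3 ^ (m₂ - 1))))
    (max (K * 2 ^ |m₁ - 2|) (K * 2 ^ |m₂ - 2|))
  refine ⟨C, fun φ ε ↦ ?_⟩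
  have hA₁ : 0 ≤ if 2 < m₁ then ‖φ‖ ^ (m₁ - 2) * ‖ε‖ ^ (2 : ℝ) else 0 := by
    split_ifs <;> positivity
  have hA₂ : 0 ≤ if 2 < m₂ then ‖φ‖ ^ (m₂ - 2) * ‖ε‖ ^ (2 : ℝ) else 0 := by
    split_ifs <;> positivity
  rcases le_or_gt ‖φ‖ (2 * ‖ε‖) with hsmall | hlarge
  · calc _ ≤ 2 * (a * 3 ^ (m₁ - 1) * ‖ε‖ ^ m₁ + b * 3 ^ (m₂ - 1) * ‖ε‖ ^ m₂) :=
          norm_taylorRemainder_le_of_norm_le_two_mul (hg1.differentiable one_ne_zero) ha hb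
            hm₁.le hm₂.le hDg hsmall
      _ = 2 * (a * 3 ^ (m₁ - 1)) * ‖ε‖ ^ m₁ + 2 * (b * 3 ^ (m₂ - 1)) * ‖ε‖ ^ m₂ := by ring
      _ ≤ C * ‖ε‖ ^ m₁ + C * ‖ε‖ ^ m₂ := by gcongr <;> simp [C]
      _ ≤ _ := by
          rw [← mul_add]
          gcongr
          linarith
  · have hεφ : ‖ε‖ ≤ ‖φ‖ := by linarith [norm_nonneg ε]
    calc _ ≤ K * (2 ^ |m₁ - 2| * ‖φ‖ ^ (m₁ - 2) + 2 ^ |m₂ - 2| * ‖φ‖ ^ (m₂ - 2)) *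
          ‖ε‖ ^ (2 : ℝ) :=
          norm_taylorRemainder_le_of_two_mul_norm_lt hK hg2 hD2 hlarge
      _ = K * 2 ^ |m₁ - 2| * (‖φ‖ ^ (m₁ - 2) * ‖ε‖ ^ (2 : ℝ)) +
          K * 2 ^ |m₂ - 2| * (‖φ‖ ^ (m₂ - 2) * ‖ε‖ ^ (2 : ℝ)) := by ring
      _ ≤ C * ((if 2 < m₁ then ‖φ‖ ^ (m₁ - 2) * ‖ε‖ ^ (2 : ℝ) else 0) + ‖ε‖ ^ m₁) +
          C * ((if 2 < m₂ then ‖φ‖ ^ (m₂ - 2) * ‖ε‖ ^ (2 : ℝ) else 0) + ‖ε‖ ^ m₂) := by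
          gcongr
          · simp [C]
          · exact rpow_sub_two_mul_rpow_two_le _ (norm_nonneg ε) hεφ
          · simp [C]
          · exact rpow_sub_two_mul_rpow_two_le _ (norm_nonneg ε) hεφ
      _ = _ := by ring

/-- Pointwise estimate (Eqn-NonlinConseq) on the Taylor remainder
`𝒩(φ, ε) = g(φ+ε) − g(φ) − Dg(φ)ε` of a nonlinearity `g` satisfying the subcriticality
assumption `‖D²g(u)‖ ≤ K(|u|^{m₁−2} + |u|^{m₂−2})` for `u ≠ 0`, with `1 < m₁ ≤ m₂`. -/
theorem stmt4 (m₁ m₂ : ℝ) (hm₁ : 1 < m₁) (hm₁₂ : m₁ ≤ m₂) (K : ℝ) (hK : 0 ≤ K)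
    (g : ℂ → ℂ) (hg1 : ContDiff ℝ 1 g) (hg2 : ContDiffOn ℝ 2 g {(0 : ℂ)}ᶜ)
    (hg0 : g 0 = 0) (hDg0 : fderiv ℝ g 0 = 0)
    (hD2 : ∀ u : ℂ, u ≠ 0 →
      ‖iteratedFDeriv ℝ 2 g u‖ ≤ K * (‖u‖ ^ (m₁ - 2) + ‖u‖ ^ (m₂ - 2))) :
    ∃ C : ℝ, ∀ φ ε : ℂ,
      ‖g (φ + ε) - g φ - fderiv ℝ g φ ε‖ ≤
        C * ((if 2 < m₁ then ‖φ‖ ^ (m₁ - 2) * ‖ε‖ ^ (2 : ℝ) else 0)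
            + (if 2 < m₂ then ‖φ‖ ^ (m₂ - 2) * ‖ε‖ ^ (2 : ℝ) else 0)
            + ‖ε‖ ^ m₁ + ‖ε‖ ^ m₂) :=
  stmt4_general m₁ m₂ hm₁ hm₁₂ K hK g hg1 hg2 hDg0 hD2
end

section
/- Let e₁ < 0, κ > 0, and M ≥ 0, and let b : [0, ∞) → ℝ be differentiable with |b′(t) − e₁·b(t)| ≤ M ⟨t⟩^{−κ} for all t ≥ 0, where ⟨t⟩ = √(1 + t²). Then there exists a constant C = C(e₁, κ), independent of M and b, such that for all t ≥ 0: |b(t)| ≤ e^{e₁ t} |b(0)| + C·M·(1 + ln⟨t⟩) ⟨t⟩^{−κ}. -/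
/-!
Put `e₁ = -2δ`. The function `e^{2δu} b(u)` has derivative of size at most `M e^{2δu} ⟨u⟩^{-κ}`.
For `u ≤ t`, Peetre's inequality `⟨u⟩^{-κ} ≤ (1 + t - u)^κ ⟨t⟩^{-κ}` and `(1 + s)^κ ≤ K e^{δs}`
bound this by `M K ⟨t⟩^{-κ} e^{δt} e^{δu}`, whose primitive is at most `(M K / δ) ⟨t⟩^{-κ} e^{2δt}`
at `u = t`. Comparing the two functions on `[0, t]` gives the bound even without the factor
`1 + ln ⟨t⟩`.
-/

open Real Set

lemma one_le_sqrt_one_add_sq (u : ℝ) : 1 ≤ √(1 + u ^ 2) :=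
  one_le_sqrt.mpr (by nlinarith [sq_nonneg u])

lemma sqrt_one_add_sq_le_mul {u t : ℝ} (hut : u ≤ t) :
    √(1 + t ^ 2) ≤ √(1 + u ^ 2) * (1 + (t - u)) := by
  have hu1 := one_le_sqrt_one_add_sq u
  have hu : u ≤ √(1 + u ^ 2) := (le_abs_self u).trans (abs_le_sqrt (by linarith))
  have hsq : √(1 + u ^ 2) ^ 2 = 1 + u ^ 2 := sq_sqrt (by positivity)
  have hlip : √(1 + t ^ 2) ≤ √(1 + u ^ 2) + (t - u) :=
    sqrt_le_iff.mpr ⟨by linarith, by nlinarith⟩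
  nlinarith

lemma sqrt_one_add_sq_rpow_neg_le {κ u t : ℝ} (hκ : 0 ≤ κ) (hut : u ≤ t) :
    √(1 + u ^ 2) ^ (-κ) ≤ (1 + (t - u)) ^ κ * √(1 + t ^ 2) ^ (-κ) := by
  have hu := one_le_sqrt_one_add_sq u
  have h := rpow_le_rpow (by positivity) (sqrt_one_add_sq_le_mul hut) hκ
  rw [mul_rpow (by positivity) (by linarith)] at h
  rw [rpow_neg (by positivity), rpow_neg (by positivity), ← div_eq_mul_inv,
    le_div_iff₀ (by positivity), inv_mul_le_iff₀ (by positivity)]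
  exact h

lemma one_add_rpow_le_mul_exp {κ δ : ℝ} (hκ : 0 < κ) (hδ : 0 < δ) :
    ∃ K, 0 ≤ K ∧ ∀ s, 0 ≤ s → (1 + s) ^ κ ≤ K * exp (δ * s) := by
  set a := δ / κ with ha
  have ha0 : 0 < a := div_pos hδ hκ
  refine ⟨(exp (a - 1) / a) ^ κ, by positivity, fun s hs => ?_⟩
  have hlin : 1 + s ≤ exp (a - 1) / a * exp (a * s) := by
    have := add_one_le_exp (a * (1 + s) - 1)
    rw [div_mul_eq_mul_div, ← exp_add, le_div_iff₀ ha0,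
      show a - 1 + a * s = a * (1 + s) - 1 by ring]
    linarith
  calc (1 + s) ^ κ ≤ (exp (a - 1) / a * exp (a * s)) ^ κ :=
        rpow_le_rpow (by linarith) hlin hκ.le
    _ = (exp (a - 1) / a) ^ κ * exp (δ * s) := by
      rw [mul_rpow (by positivity) (by positivity), ← exp_mul]
      congr 2; rw [ha]; field_simp

lemma exp_mul_sqrt_one_add_sq_rpow_neg_le {δ κ K u t : ℝ} (hκ : 0 ≤ κ)
    (hK : ∀ s, 0 ≤ s → (1 + s) ^ κ ≤ K * exp (δ * s)) (hut : u ≤ t) :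
    exp (2 * δ * u) * √(1 + u ^ 2) ^ (-κ) ≤ K * √(1 + t ^ 2) ^ (-κ) * exp (δ * (t + u)) := by
  calc exp (2 * δ * u) * √(1 + u ^ 2) ^ (-κ)
      ≤ exp (2 * δ * u) * ((1 + (t - u)) ^ κ * √(1 + t ^ 2) ^ (-κ)) := by
        gcongr; exact sqrt_one_add_sq_rpow_neg_le hκ hut
    _ ≤ exp (2 * δ * u) * (K * exp (δ * (t - u)) * √(1 + t ^ 2) ^ (-κ)) := by
        gcongr; exact hK _ (by linarith)
    _ = K * √(1 + t ^ 2) ^ (-κ) * exp (δ * (t + u)) := by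
        rw [show δ * (t + u) = 2 * δ * u + δ * (t - u) by ring, exp_add]; ring

theorem exp_neg_mul_abs_le_of_abs_deriv_sub_mul_le {c a t : ℝ} {b b' g g' : ℝ → ℝ}
    (hat : a ≤ t) (hb : ∀ u ∈ Icc a t, HasDerivAt b (b' u) u) (hg : ∀ u, HasDerivAt g (g' u) u)
    (hbound : ∀ u ∈ Ico a t, exp (-c * u) * |b' u - c * b u| ≤ g' u) :
    exp (-c * t) * |b t| ≤ exp (-c * a) * |b a| + (g t - g a) := by
  have hf : ∀ u ∈ Icc a t, HasDerivAt (fun v => exp (-c * v) * b v)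
      (exp (-c * u) * (b' u - c * b u)) u := fun u hu =>
    ((((hasDerivAt_id' u).const_mul (-c)).exp).mul (hb u hu)).congr_deriv (by ring)
  have := image_norm_le_of_norm_deriv_right_le_deriv_boundary
    (B := fun u => exp (-c * a) * |b a| + (g u - g a))
    (fun u hu => (hf u hu).continuousAt.continuousWithinAt)
    (fun u hu => (hf u (Ico_subset_Icc_self hu)).hasDerivWithinAt) (by simp)
    (fun u => ((hg u).sub_const (g a)).const_add _)
    (fun u hu => by simpa [abs_mul, abs_of_pos (exp_pos _)] using hbound u hu)
    (right_mem_Icc.mpr hat)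
  simpa [abs_mul, abs_of_pos (exp_pos _)] using this

theorem abs_le_exp_mul_add_of_abs_deriv_add_mul_le {δ κ K M t : ℝ} {b b' : ℝ → ℝ}
    (hδ : 0 < δ) (hκ : 0 ≤ κ) (hM : 0 ≤ M) (hK0 : 0 ≤ K)
    (hK : ∀ s, 0 ≤ s → (1 + s) ^ κ ≤ K * exp (δ * s)) (ht : 0 ≤ t)
    (hb : ∀ u ∈ Icc 0 t, HasDerivAt b (b' u) u)
    (hb' : ∀ u ∈ Icc 0 t, |b' u + 2 * δ * b u| ≤ M * √(1 + u ^ 2) ^ (-κ)) :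
    |b t| ≤ exp (-(2 * δ) * t) * |b 0| + K / δ * M * √(1 + t ^ 2) ^ (-κ) := by
  set p := √(1 + t ^ 2) ^ (-κ)
  set A := M * K * p * exp (δ * t)
  have hg (u : ℝ) : HasDerivAt (fun u => A / δ * exp (δ * u)) (A * exp (δ * u)) u :=
    ((((hasDerivAt_id' u).const_mul δ).exp).const_mul (A / δ)).congr_deriv (by field_simp)
  have hcmp := exp_neg_mul_abs_le_of_abs_deriv_sub_mul_le ht hb hg (fun u hu => calc
      exp (-(-(2 * δ)) * u) * |b' u - -(2 * δ) * b u|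
          ≤ exp (2 * δ * u) * (M * √(1 + u ^ 2) ^ (-κ)) := by
        rw [neg_neg, neg_mul, sub_neg_eq_add]; gcongr; exact hb' u (Ico_subset_Icc_self hu)
      _ ≤ M * (K * p * exp (δ * (t + u))) := by
        rw [mul_left_comm]
        exact mul_le_mul_of_nonneg_left
          (exp_mul_sqrt_one_add_sq_rpow_neg_le hκ hK hu.2.le) hM
      _ = A * exp (δ * u) := by rw [mul_add, exp_add]; ring)
  simp only [neg_neg, mul_zero, exp_zero, one_mul, mul_one] at hcmp
  have hexp : exp (-(2 * δ) * t) * exp (δ * t) * exp (δ * t) = 1 := by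
    rw [← exp_add, ← exp_add, ← exp_zero]; ring_nf
  calc |b t| = exp (-(2 * δ) * t) * (exp (2 * δ * t) * |b t|) := by
        rw [← mul_assoc, ← exp_add]; simp
    _ ≤ exp (-(2 * δ) * t) * (|b 0| + A / δ * exp (δ * t)) := by
        gcongr; linarith [show 0 ≤ A / δ by positivity]
    _ = exp (-(2 * δ) * t) * |b 0| + K / δ * M * p := by
        linear_combination (M * K * p / δ) * hexp

/-- Decay of the stable-mode amplitude: if `e₁ < 0`, `κ > 0`, and `b` is differentiable on
`[0,∞)` with `|b′(t) − e₁ b(t)| ≤ M ⟨t⟩^{−κ}`, then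
`|b(t)| ≤ e^{e₁ t}|b(0)| + C·M·(1 + ln⟨t⟩)⟨t⟩^{−κ}` for a constant `C = C(e₁, κ)`. -/
theorem stmt14 (e₁ κ : ℝ) (he₁ : e₁ < 0) (hκ : 0 < κ) :
    ∃ C : ℝ, ∀ M : ℝ, 0 ≤ M → ∀ b b' : ℝ → ℝ,
      (∀ t : ℝ, 0 ≤ t → HasDerivAt b (b' t) t) →
      (∀ t : ℝ, 0 ≤ t → |b' t - e₁ * b t| ≤ M * Real.sqrt (1 + t ^ 2) ^ (-κ)) →
      ∀ t : ℝ, 0 ≤ t →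
        |b t| ≤ Real.exp (e₁ * t) * |b 0| +
          C * M * (1 + Real.log (Real.sqrt (1 + t ^ 2))) * Real.sqrt (1 + t ^ 2) ^ (-κ) := by
  obtain ⟨δ, hδ, rfl⟩ : ∃ δ, 0 < δ ∧ e₁ = -(2 * δ) := ⟨-e₁ / 2, by linarith, by ring⟩
  obtain ⟨K, hK0, hK⟩ := one_add_rpow_le_mul_exp hκ hδ
  refine ⟨K / δ, fun M hM b b' hb hb' t ht => ?_⟩
  have hdecay := abs_le_exp_mul_add_of_abs_deriv_add_mul_le hδ hκ.le hM hK0 hK ht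
    (fun u hu => hb u hu.1) (fun u hu => by simpa using hb' u hu.1)
  have hlog : 1 ≤ 1 + log √(1 + t ^ 2) :=
    le_add_of_nonneg_right (log_nonneg (one_le_sqrt_one_add_sq t))
  have := mul_le_mul_of_nonneg_left hlog
    (show 0 ≤ K / δ * M * √(1 + t ^ 2) ^ (-κ) by positivity)
  linarith
end

section
/- Let e₂ > 0, K ≥ 0, C₁ ≥ 0, and T < T′. Let b₊ : [T, T′] → (0, ∞) satisfy b₊(t) ≥ e^{(2/3)e₂(t−s)} b₊(s) for all T ≤ s ≤ t ≤ T′, and let b₋ : [T, T′] → ℝ be differentiable with |b₋′(t) + e₂·b₋(t)| ≤ K·b₊(t) for all t ∈ [T, T′] and |b₋(T)| ≤ C₁·b₊(T). Then for all t ∈ [T, T′]: |b₋(t)| ≤ (C₁ + 3K/(5e₂))·b₊(t). -/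
/-!
Multiplying by the integrating factor `exp (e₂ t)` turns the differential inequality into
`|(exp (e₂ t) b₋ t)'| ≤ K exp (e₂ t) b₊ t`. The growth of `b₊` makes the weight
`w t = exp (e₂ t) b₊ t` grow at rate at least `(5/3) e₂`, so on `[T, t]` the derivative is
at most `K w t exp ((5/3) e₂ (τ - t))`, whose integral is at most `3 K w t / (5 e₂)`.
Adding the initial value `exp (e₂ T) |b₋ T| ≤ C₁ w T ≤ C₁ w t` and dividing by `exp (e₂ t)`
gives the estimate.
-/

open Real Set

theorem norm_le_add_div_of_norm_deriv_le_mul_exp {E : Type*} [NormedAddCommGroup E]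
    [NormedSpace ℝ E] {f f' : ℝ → E} {a b C μ : ℝ} (hab : a ≤ b) (hμ : 0 < μ)
    (hC : 0 ≤ C) (hf : ContinuousOn f (Icc a b))
    (hf' : ∀ x ∈ Ico a b, HasDerivWithinAt f (f' x) (Ici x) x)
    (bound : ∀ x ∈ Ico a b, ‖f' x‖ ≤ C * exp (μ * (x - b))) :
    ‖f b‖ ≤ ‖f a‖ + C / μ := by
  set B : ℝ → ℝ := fun x => ‖f a‖ + C / μ * (exp (μ * (x - b)) - exp (μ * (a - b)))
  have hB : ∀ x, HasDerivAt B (C * exp (μ * (x - b))) x := fun x => by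
    refine ((((hasDerivAt_id' x).sub_const b).const_mul μ).exp.sub_const
      (exp (μ * (a - b)))).const_mul (C / μ) |>.const_add ‖f a‖ |>.congr_deriv ?_
    field_simp
  have hfb : ‖f b‖ ≤ B b :=
    image_norm_le_of_norm_deriv_right_le_deriv_boundary hf hf' (by simp [B]) hB bound
      (right_mem_Icc.2 hab)
  have : 0 ≤ C / μ * exp (μ * (a - b)) := by positivity
  calc ‖f b‖ ≤ B b := hfb
    _ ≤ ‖f a‖ + C / μ := by simp only [B, sub_self, mul_zero, exp_zero]; linarith

theorem hasDerivAt_exp_const_mul_mul {f : ℝ → ℝ} {f' c x : ℝ} (hf : HasDerivAt f f' x) :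
    HasDerivAt (fun t => exp (c * t) * f t) (exp (c * x) * (f' + c * f x)) x := by
  refine (((hasDerivAt_id' x).const_mul c).exp.mul hf).congr_deriv ?_
  ring

theorem exp_mul_mul_le_of_exp_mul_le {c ρ s t x y : ℝ} (h : exp (ρ * (t - s)) * x ≤ y) :
    exp (c * s) * x ≤ exp ((c + ρ) * (s - t)) * (exp (c * t) * y) := by
  have hx : x ≤ exp (-(ρ * (t - s))) * y := by
    rwa [exp_neg, inv_mul_eq_div, le_div_iff₀' (exp_pos _)]
  calc exp (c * s) * x ≤ exp (c * s) * (exp (-(ρ * (t - s))) * y) := by gcongr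
    _ = exp ((c + ρ) * (s - t)) * (exp (c * t) * y) := by
      rw [← mul_assoc, ← mul_assoc, ← exp_add, ← exp_add]
      ring_nf

theorem exp_mul_mul_abs_le_of_abs_deriv_add_mul_le {f f' g : ℝ → ℝ} {a b c μ K : ℝ}
    (hab : a ≤ b) (hμ : 0 < μ) (hK : 0 ≤ K) (hf : ∀ x ∈ Icc a b, HasDerivAt f (f' x) x)
    (hg : ∀ x ∈ Icc a b, exp (c * x) * g x ≤ exp (μ * (x - b)) * (exp (c * b) * g b))
    (hineq : ∀ x ∈ Icc a b, |f' x + c * f x| ≤ K * g x) :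
    exp (c * b) * |f b| ≤ exp (c * a) * |f a| + K * (exp (c * b) * g b) / μ := by
  have hKg : 0 ≤ K * (exp (c * b) * g b) := by
    rw [mul_left_comm]
    exact mul_nonneg (exp_pos _).le ((abs_nonneg _).trans (hineq b (right_mem_Icc.2 hab)))
  have hIco : Ico a b ⊆ Icc a b := Ico_subset_Icc_self
  have h := norm_le_add_div_of_norm_deriv_le_mul_exp hab hμ hKg
    (fun x hx => (hasDerivAt_exp_const_mul_mul (c := c) (hf x hx)).continuousAt.continuousWithinAt)
    (fun x hx => (hasDerivAt_exp_const_mul_mul (hf x (hIco hx))).hasDerivWithinAt)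
    (fun x hx => calc
      ‖exp (c * x) * (f' x + c * f x)‖ ≤ K * (exp (c * x) * g x) := by
          rw [norm_mul, norm_of_nonneg (exp_pos _).le, mul_left_comm]
          exact mul_le_mul_of_nonneg_left (hineq x (hIco hx)) (exp_pos _).le
      _ ≤ K * (exp (c * b) * g b) * exp (μ * (x - b)) := by
          rw [mul_assoc, mul_comm (exp (c * b) * g b)]
          exact mul_le_mul_of_nonneg_left (hg x (hIco hx)) hK)
  simpa only [norm_mul, norm_of_nonneg (exp_pos _).le, Real.norm_eq_abs] using h

theorem stmt17_general (e₂ K C₁ T T' : ℝ) (he₂ : 0 < e₂) (hK : 0 ≤ K) (hC₁ : 0 ≤ C₁)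
    (bp : ℝ → ℝ) (hbp_pos : ∀ t ∈ Set.Icc T T', 0 < bp t)
    (hbp_grow : ∀ s ∈ Set.Icc T T', ∀ t ∈ Set.Icc T T', s ≤ t →
      Real.exp (2 / 3 * e₂ * (t - s)) * bp s ≤ bp t)
    (bm bm' : ℝ → ℝ)
    (hderiv : ∀ t ∈ Set.Icc T T', HasDerivAt bm (bm' t) t)
    (hineq : ∀ t ∈ Set.Icc T T', |bm' t + e₂ * bm t| ≤ K * bp t)
    (hinit : |bm T| ≤ C₁ * bp T) :
    ∀ t ∈ Set.Icc T T', |bm t| ≤ (C₁ + 3 * K / (5 * e₂)) * bp t := by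
  intro t ht
  have hsub : Icc T t ⊆ Icc T T' := Icc_subset_Icc_right ht.2
  set w : ℝ → ℝ := fun τ => exp (e₂ * τ) * bp τ
  have hw : ∀ τ ∈ Icc T t, w τ ≤ exp (5 / 3 * e₂ * (τ - t)) * w t := fun τ hτ => by
    have := exp_mul_mul_le_of_exp_mul_le (c := e₂) (hbp_grow τ (hsub hτ) t ht hτ.2)
    rwa [show e₂ + 2 / 3 * e₂ = 5 / 3 * e₂ by ring] at this
  have hwT : w T ≤ w t := by
    have : exp (5 / 3 * e₂ * (T - t)) ≤ 1 := exp_le_one_iff.2 (by nlinarith [ht.1])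
    nlinarith [hw T (left_mem_Icc.2 ht.1), (mul_pos (exp_pos (e₂ * t)) (hbp_pos t ht)).le]
  have hduhamel := exp_mul_mul_abs_le_of_abs_deriv_add_mul_le ht.1 (by positivity) hK
    (fun τ hτ => hderiv τ (hsub hτ)) hw (fun τ hτ => hineq τ (hsub hτ))
  have hinit' : exp (e₂ * T) * |bm T| ≤ C₁ * w T :=
    (mul_le_mul_of_nonneg_left hinit (exp_pos _).le).trans_eq (mul_left_comm _ _ _)
  have : exp (e₂ * t) * |bm t| ≤ exp (e₂ * t) * ((C₁ + 3 * K / (5 * e₂)) * bp t) := calc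
    exp (e₂ * t) * |bm t| ≤ C₁ * w t + K * w t / (5 / 3 * e₂) := by
        linarith [mul_le_mul_of_nonneg_left hwT hC₁]
    _ = exp (e₂ * t) * ((C₁ + 3 * K / (5 * e₂)) * bp t) := by simp only [w]; field_simp
  exact le_of_mul_le_mul_left this (exp_pos _)

/-- Comparison estimate for the stable-mode amplitude in the escape case: if `b₊ > 0` grows
at exponential rate at least `(2/3)e₂`, `|b₋′ + e₂ b₋| ≤ K b₊`, and `|b₋(T)| ≤ C₁ b₊(T)`,
then `|b₋(t)| ≤ (C₁ + 3K/(5e₂)) b₊(t)` on `[T, T']`. -/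
theorem stmt17 (e₂ K C₁ T T' : ℝ) (he₂ : 0 < e₂) (hK : 0 ≤ K) (hC₁ : 0 ≤ C₁) (hTT' : T < T')
    (bp : ℝ → ℝ) (hbp_pos : ∀ t ∈ Set.Icc T T', 0 < bp t)
    (hbp_grow : ∀ s ∈ Set.Icc T T', ∀ t ∈ Set.Icc T T', s ≤ t →
      Real.exp (2 / 3 * e₂ * (t - s)) * bp s ≤ bp t)
    (bm bm' : ℝ → ℝ)
    (hderiv : ∀ t ∈ Set.Icc T T', HasDerivAt bm (bm' t) t)
    (hineq : ∀ t ∈ Set.Icc T T', |bm' t + e₂ * bm t| ≤ K * bp t)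
    (hinit : |bm T| ≤ C₁ * bp T) :
    ∀ t ∈ Set.Icc T T', |bm t| ≤ (C₁ + 3 * K / (5 * e₂)) * bp t :=
  stmt17_general e₂ K C₁ T T' he₂ hK hC₁ bp hbp_pos hbp_grow bm bm' hderiv hineq hinit
end
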